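/- Let F be a field of characteristic 2, k ≥ 2r, and J(k,r) = I_k + N where N is the k×k matrix whose only nonzero block is the identity I_r in the lower-left corner (i.e. N_{k-r+i, i} = 1 for 1 ≤ i ≤ r). Then a k×k matrix M commutes with J(k,r) if and only if, in the block decomposition k = r + (k-2r) + r, M has the form [[B1, 0, 0],[B2, B3, 0],[B4, B5, B1]] (same r×r block B1 in the top-left and bottom-right corners). -/

import Mathlib

/-! Since `J(k,r) = 1 + N`, a matrix commutes with `J(k,r)` iff it commutes with `N`. The product
`M * N` moves the last block column of `M` to the first one and `N * M` moves the first block row of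
`M` to the last one; comparing the two block by block forces the zero blocks and the repeated
corner block. -/

namespace Matrix

variable {α β R : Type*} [DecidableEq α]

variable (α β R) in
/-- The nilpotent part `N = J(k,r) - 1`, with `α = Fin r` and `β = Fin (k - 2r)`. -/
def cornerIdentity [Zero R] [One R] : Matrix (α ⊕ (β ⊕ α)) (α ⊕ (β ⊕ α)) R :=
  fromBlocks 0 0 (fromRows (0 : Matrix β α R) 1) 0

variable [Fintype α] [Semiring R]

theorem mul_fromRows_zero_one {m : Type*} [Fintype β] (X : Matrix m (β ⊕ α) R) :
    X * fromRows (0 : Matrix β α R) (1 : Matrix α α R) = X.toCols₂ := by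
  rw [← fromCols_toCols X, fromCols_mul_fromRows, toCols₂_fromCols, Matrix.mul_zero, Matrix.mul_one,
    zero_add]

theorem fromRows_zero_one_mul {n : Type*} (X : Matrix α n R) :
    fromRows (0 : Matrix β α R) (1 : Matrix α α R) * X = fromRows 0 X := by
  rw [fromRows_mul, Matrix.zero_mul, Matrix.one_mul]

theorem fromBlocks_commute_cornerIdentity_iff [Fintype β] (A B₂ D₂₂ : Matrix α α R)
    (B₁ : Matrix α β R) (C : Matrix (β ⊕ α) α R) (D₁₁ : Matrix β β R) (D₁₂ : Matrix β α R)
    (D₂₁ : Matrix α β R) :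
    Commute (fromBlocks A (fromCols B₁ B₂) C (fromBlocks D₁₁ D₁₂ D₂₁ D₂₂)) (cornerIdentity α β R) ↔
      B₁ = 0 ∧ B₂ = 0 ∧ D₁₂ = 0 ∧ D₂₂ = A := by
  rw [Commute, SemiconjBy, cornerIdentity, fromBlocks_multiply, fromBlocks_multiply]
  simp only [mul_fromRows_zero_one, fromRows_zero_one_mul, toCols₂_fromCols, Matrix.mul_zero,
    Matrix.zero_mul, add_zero, zero_add, fromBlocks_inj]
  rw [← fromCols_fromRows_eq_fromBlocks D₁₁, toCols₂_fromCols, fromRows_ext_iff, ← fromRows_zero,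
    fromRows_ext_iff]
  simp only [true_and]
  rw [← fromCols_zero, eq_comm (a := fromCols 0 0), fromCols_ext_iff]
  tauto

theorem commute_cornerIdentity_iff [Fintype β] (M : Matrix (α ⊕ (β ⊕ α)) (α ⊕ (β ⊕ α)) R) :
    Commute M (cornerIdentity α β R) ↔
      ∃ (B₁ : Matrix α α R) (B₂ : Matrix β α R) (B₃ : Matrix β β R) (B₄ : Matrix α α R)
        (B₅ : Matrix α β R),
        M = fromBlocks B₁ 0 (fromRows B₂ B₄) (fromBlocks B₃ 0 B₅ B₁) := by
  constructor
  · intro h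
    obtain ⟨A, B₁, B₂, C₁, C₂, D₁₁, D₁₂, D₂₁, D₂₂, rfl⟩ : ∃ A B₁ B₂ C₁ C₂ D₁₁ D₁₂ D₂₁ D₂₂,
        M = fromBlocks A (fromCols B₁ B₂) (fromRows C₁ C₂) (fromBlocks D₁₁ D₁₂ D₂₁ D₂₂) :=
      ⟨_, _, _, _, _, _, _, _, _, by
        rw [fromCols_toCols, fromRows_toRows, fromBlocks_toBlocks, fromBlocks_toBlocks]⟩
    obtain ⟨rfl, rfl, rfl, rfl⟩ := (fromBlocks_commute_cornerIdentity_iff ..).1 h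
    exact ⟨D₂₂, C₁, D₁₁, C₂, D₂₁, by rw [fromCols_zero]⟩
  · rintro ⟨B₁, B₂, B₃, B₄, B₅, rfl⟩
    rw [← fromCols_zero]
    exact (fromBlocks_commute_cornerIdentity_iff ..).2 ⟨rfl, rfl, rfl, rfl⟩

end Matrix

theorem stmt_10 {F : Type*} [Field F] {k r : ℕ}
    (M : Matrix (Fin r ⊕ (Fin (k - 2 * r) ⊕ Fin r)) (Fin r ⊕ (Fin (k - 2 * r) ⊕ Fin r)) F) :
    (M * (1 + Matrix.of (fun i j : Fin r ⊕ (Fin (k - 2 * r) ⊕ Fin r) =>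
        match i, j with
        | Sum.inr (Sum.inr a), Sum.inl b => if a = b then (1 : F) else 0
        | _, _ => 0)) =
      (1 + Matrix.of (fun i j : Fin r ⊕ (Fin (k - 2 * r) ⊕ Fin r) =>
        match i, j with
        | Sum.inr (Sum.inr a), Sum.inl b => if a = b then (1 : F) else 0
        | _, _ => 0)) * M) ↔
    ∃ (B1 : Matrix (Fin r) (Fin r) F) (B2 : Matrix (Fin (k - 2 * r)) (Fin r) F)
      (B3 : Matrix (Fin (k - 2 * r)) (Fin (k - 2 * r)) F) (B4 : Matrix (Fin r) (Fin r) F)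
      (B5 : Matrix (Fin r) (Fin (k - 2 * r)) F),
        M = Matrix.fromBlocks B1 0 (Matrix.fromRows B2 B4) (Matrix.fromBlocks B3 0 B5 B1) := by
  rw [mul_add, add_mul, mul_one, one_mul, add_right_inj]
  show Commute M _ ↔ _
  convert Matrix.commute_cornerIdentity_iff M using 3
  ext (i | i | i) (j | j | j) <;> simp [Matrix.cornerIdentity, Matrix.one_apply]
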